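/- Write f_i^{(m)} for the function on S̃_m given by f_i^{(m)}(v) = (e_i(t_{v(1)},…,t_{v(m)}) − e_i(t_1,…,t_m))/2. Let w ∈ S̃_n with w(q) = n for some q ∈ {1,…,n}, and define w' ∈ S̃_{n−1} by w'(k) = w(k) for k < q and w'(k) = w(k+1) for q ≤ k ≤ n−1. Then for every i ≥ 1, f_i^{(n−1)}(w') = ∑_{j=0}^{i−1} f_{i−j}^{(n)}(w)·(−t_n)^j, an identity in ℤ[t_1,…,t_n] (with ℤ[t_1,…,t_{n−1}] regarded as a subring). If instead w(q) = −n and w' is defined by the same deletion, then f_i^{(n−1)}(w') = ∑_{j=0}^{i−1} f_{i−j}^{(n)}(w)·t_n^j + ∑_{j=1}^{i} e_{i−j}(t_1,…,t_{n−1})·t_n^j. -/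

import Mathlib

open MvPolynomial

/-- The `i`-th elementary symmetric polynomial in the values `g k`. -/
noncomputable def eS {σ : Type*} [Fintype σ] {R : Type*} [CommRing R] (i : ℕ) (g : σ → R) : R :=
  ∑ S ∈ Finset.powersetCard i Finset.univ, ∏ k ∈ S, g k

/-- `R = ℤ[t_1,…,t_n]`. -/
abbrev Rn (n : ℕ) : Type := MvPolynomial (Fin n) ℤ

/-- A signed permutation of `{±1,…,±n}` in one-line notation: `w` is determined by the values
`w 0, …, w (n-1)` (representing `w(1),…,w(n)`), which are nonzero integers of absolute value
at most `n` with pairwise distinct absolute values; the condition `w(-i) = -w(i)` determines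
the rest of the bijection of `{±1,…,±n}`. -/
def IsSignedPerm {n : ℕ} (w : Fin n → ℤ) : Prop :=
  (∀ i, w i ≠ 0 ∧ (w i).natAbs ≤ n) ∧ Function.Injective fun i => (w i).natAbs

/-- The signed permutation group `S̃_n` (one-line notation). -/
def SP (n : ℕ) : Type := {w : Fin n → ℤ // IsSignedPerm w}

/-- `t_m` for `m ∈ {±1,…,±n}`, with the convention `t_{-m} = -t_m`. -/
noncomputable def tvar (n : ℕ) (m : ℤ) : Rn n :=
  if h : m.natAbs - 1 < n then C m.sign * X ⟨m.natAbs - 1, h⟩ else 0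

/-- `e_i(t_{w(1)},…,t_{w(n)}) - e_i(t_1,…,t_n)`; this is `2·f_i^{(n)}(w)`. -/
noncomputable def diffS (n : ℕ) (i : ℕ) (w : SP n) : Rn n :=
  eS i (fun k => tvar n (w.1 k)) - eS i (fun k : Fin n => (X k : Rn n))

/-! Deleting the entry `w(q) = ±n` splits off one linear factor of the generating polynomial
`∏ (1 + t_{w(k)} x)`: `e_{s+1} = e'_{s+1} + t_{w(q)} e'_s`, and the same for the identity with
`t_n`. Subtracting the two recursions, `g_s = f_s^{(n-1)}(w')` satisfies `g_0 = 0` and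
`g_{s+1} = ∓t_n g_s + f_{s+1}^{(n)}(w)`, with the extra term `t_n e_s(t_1,…,t_{n-1})` when
`w(q) = -n` because then the two factors `1 - t_n x` and `1 + t_n x` differ. Unrolling the
recursion gives both formulas; the factor `2` cancels since `ℤ[t]` is a domain. -/

theorem Multiset.esymm_cons_succ {R : Type*} [CommSemiring R] (a : R) (s : Multiset R) (n : ℕ) :
    (a ::ₘ s).esymm (n + 1) = s.esymm (n + 1) + a * s.esymm n := by
  simp only [Multiset.esymm, Multiset.powersetCard_cons, Multiset.map_add, Multiset.sum_add,
    Multiset.map_map, Function.comp_def, Multiset.prod_cons, Multiset.sum_map_mul_left]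

theorem eq_sum_range_pow_mul_of_recurrence {R : Type*} [CommSemiring R] {u v : ℕ → R} {c : R}
    (h0 : u 0 = 0) (hsucc : ∀ s, u (s + 1) = c * u s + v s) (i : ℕ) :
    u i = ∑ j ∈ Finset.range i, c ^ j * v (i - 1 - j) := by
  induction i with
  | zero => simp [h0]
  | succ i ih =>
    rw [hsucc, ih, Finset.sum_range_succ', Finset.mul_sum]
    simp only [Nat.add_sub_cancel, Nat.sub_zero, pow_zero, one_mul, pow_succ']
    congr 1
    refine Finset.sum_congr rfl fun j _ => ?_
    rw [Nat.sub_sub, Nat.add_comm j 1, ← Nat.sub_sub, mul_assoc]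

section ElementarySymmetric

variable {R : Type*} [CommRing R]

theorem eS_eq_esymm {σ : Type*} [Fintype σ] (i : ℕ) (g : σ → R) :
    eS i g = (Finset.univ.val.map g).esymm i :=
  (Finset.esymm_map_val g _ i).symm

theorem eS_zero {σ : Type*} [Fintype σ] (g : σ → R) : eS 0 g = 1 := by
  simp [eS]

theorem eS_succ_eq_succAbove {m : ℕ} (g : Fin (m + 1) → R) (q : Fin (m + 1)) (i : ℕ) :
    eS (i + 1) g = eS (i + 1) (g ∘ q.succAbove) + g q * eS i (g ∘ q.succAbove) := by
  rw [eS_eq_esymm, eS_eq_esymm, eS_eq_esymm, Fin.univ_succAbove _ q, Finset.cons_val,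
    Multiset.map_cons, Multiset.esymm_cons_succ, Finset.map_val, Multiset.map_map]
  rfl

theorem map_eS {σ S F : Type*} [Fintype σ] [CommRing S] [FunLike F R S] [RingHomClass F R S]
    (f : F) (i : ℕ) (g : σ → R) : f (eS i g) = eS i (f ∘ g) := by
  simp only [eS, map_sum, map_prod, Function.comp_apply]

end ElementarySymmetric

theorem tvar_neg (n : ℕ) (a : ℤ) : tvar n (-a) = -tvar n a := by
  simp only [tvar, Int.natAbs_neg, Int.sign_neg, map_neg, neg_mul]
  split_ifs <;> simp

theorem tvar_natCast_succ (m : ℕ) : tvar (m + 1) ((m : ℤ) + 1) = X (Fin.last m) := by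
  have hsign : ((m : ℤ) + 1).sign = 1 := Int.sign_eq_one_of_pos (by omega)
  have habs : ((m : ℤ) + 1).natAbs - 1 = m := by omega
  rw [tvar, dif_pos (by omega), hsign]
  simp only [habs, map_one, one_mul]
  rfl

theorem rename_castSucc_tvar {m : ℕ} {a : ℤ} (ha : a ≠ 0) (hle : a.natAbs ≤ m) :
    rename Fin.castSucc (tvar m a) = tvar (m + 1) a := by
  have : a.natAbs - 1 < m := by omega
  rw [tvar, tvar, dif_pos this, dif_pos (by omega), map_mul, rename_C, rename_X]
  rfl

theorem Fin.ite_castSucc_succ_eq_succAbove {α : Type*} {m : ℕ} (f : Fin (m + 1) → α)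
    (q : Fin (m + 1)) (k : Fin m) :
    (if (k : ℕ) < q then f k.castSucc else f k.succ) = f (q.succAbove k) := by
  split_ifs with h
  · rw [Fin.succAbove_of_castSucc_lt q k h]
  · rw [Fin.succAbove_of_le_castSucc q k (not_lt.1 h)]

theorem diffS_zero (n : ℕ) (w : SP n) : diffS n 0 w = 0 := by
  rw [diffS, eS_zero, eS_zero, sub_self]

section Deletion

variable {m : ℕ} (w : SP (m + 1)) (q : Fin (m + 1)) (w' : SP m)
  (hw' : ∀ k : Fin m, w'.1 k = if (k : ℕ) < (q : ℕ) then w.1 (Fin.castSucc k) else w.1 k.succ)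
include hw'

theorem rename_diffS_of_delete (s : ℕ) :
    rename Fin.castSucc (diffS m s w') =
      eS s ((fun k => tvar (m + 1) (w.1 k)) ∘ q.succAbove) -
        eS s (fun k : Fin m => (X k.castSucc : Rn (m + 1))) := by
  rw [diffS, map_sub, map_eS, map_eS]
  congr 2
  · funext k
    simp only [Function.comp_apply]
    rw [rename_castSucc_tvar (w'.2.1 k).1 (w'.2.1 k).2, hw',
      Fin.ite_castSucc_succ_eq_succAbove (fun k => w.1 k)]
  · funext k
    simp only [Function.comp_apply, rename_X]

theorem rename_diffS_succ_of_delete (s : ℕ) :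
    rename Fin.castSucc (diffS m (s + 1) w') =
      diffS (m + 1) (s + 1) w - tvar (m + 1) (w.1 q) * rename Fin.castSucc (diffS m s w') +
        (X (Fin.last m) - tvar (m + 1) (w.1 q)) *
          eS s (fun k : Fin m => (X k.castSucc : Rn (m + 1))) := by
  rw [rename_diffS_of_delete w q w' hw', rename_diffS_of_delete w q w' hw', diffS,
    eS_succ_eq_succAbove _ q, eS_succ_eq_succAbove (fun k => (X k : Rn (m + 1))) (Fin.last m),
    Fin.succAbove_last]
  simp only [Function.comp_def]
  ring

end Deletion

/-- Encoding: `n = m + 1`; `F i` and `G i` stand for `f_i^{(n)}` and `f_i^{(n-1)}`, pinned down by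
`2·F i = diffS (m + 1) i` and `2·G i = diffS m i`; `ℤ[t_1,…,t_{n-1}] ⊆ ℤ[t_1,…,t_n]` via
`rename Fin.castSucc`; `t_n = X (Fin.last m)`; `w'` deletes the `q`-th entry of `w`. -/
theorem f_restriction_typeB_general (m : ℕ)
    (F : ℕ → SP (m + 1) → Rn (m + 1)) (G : ℕ → SP m → Rn m)
    (hF : ∀ i w, 2 * F i w = diffS (m + 1) i w)
    (hG : ∀ i v, 2 * G i v = diffS m i v)
    (w : SP (m + 1)) (q : Fin (m + 1)) (w' : SP m)
    (hw' : ∀ k : Fin m, w'.1 k =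
      if (k : ℕ) < (q : ℕ) then w.1 (Fin.castSucc k) else w.1 k.succ)
    (i : ℕ) :
    (w.1 q = (m : ℤ) + 1 →
      rename Fin.castSucc (G i w') =
        ∑ j ∈ Finset.range i, F (i - j) w * (-(X (Fin.last m) : Rn (m + 1))) ^ j) ∧
    (w.1 q = -((m : ℤ) + 1) →
      rename Fin.castSucc (G i w') =
        ∑ j ∈ Finset.range i, F (i - j) w * (X (Fin.last m) : Rn (m + 1)) ^ j +
        ∑ j ∈ Finset.Icc 1 i,
          eS (i - j) (fun k : Fin m => (X (Fin.castSucc k) : Rn (m + 1))) *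
            (X (Fin.last m) : Rn (m + 1)) ^ j) := by
  set t : Rn (m + 1) := X (Fin.last m)
  set A : ℕ → Rn (m + 1) := fun s => eS s (fun k : Fin m => (X k.castSucc : Rn (m + 1)))
  set g : ℕ → Rn (m + 1) := fun s => rename Fin.castSucc (G s w')
  have hg (s : ℕ) : 2 * g s = rename Fin.castSucc (diffS m s w') := by
    simp only [g, ← hG, map_mul, map_ofNat]
  have hg0 : g 0 = 0 := mul_left_cancel₀ two_ne_zero (by rw [hg, diffS_zero, map_zero, mul_zero])
  have hrec (s : ℕ) : 2 * g (s + 1) =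
      2 * F (s + 1) w - tvar (m + 1) (w.1 q) * (2 * g s) + (t - tvar (m + 1) (w.1 q)) * A s := by
    rw [hg, hg, hF]
    exact rename_diffS_succ_of_delete w q w' hw' s
  constructor
  · intro hq
    rw [hq, tvar_natCast_succ] at hrec
    have hsucc (s : ℕ) : g (s + 1) = -t * g s + F (s + 1) w :=
      mul_left_cancel₀ two_ne_zero (by linear_combination hrec s)
    refine (eq_sum_range_pow_mul_of_recurrence hg0 hsucc i).trans ?_
    refine Finset.sum_congr rfl fun j hj => ?_
    rw [show i - 1 - j + 1 = i - j by grind, mul_comm]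
  · intro hq
    rw [hq, tvar_neg, tvar_natCast_succ] at hrec
    have hsucc (s : ℕ) : g (s + 1) = t * g s + (F (s + 1) w + t * A s) :=
      mul_left_cancel₀ two_ne_zero (by linear_combination hrec s)
    refine (eq_sum_range_pow_mul_of_recurrence hg0 hsucc i).trans ?_
    rw [← Finset.Ico_add_one_right_eq_Icc, Finset.sum_Ico_eq_sum_range,
      Nat.add_sub_cancel, ← Finset.sum_add_distrib]
    refine Finset.sum_congr rfl fun j hj => ?_
    rw [show i - 1 - j + 1 = i - j by grind, Nat.sub_sub, Nat.add_comm 1 j]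
    ring

/-- Lemma on restriction of the `f_i`'s (type `B`), stated with `n = m + 1`, `m ≥ 1`, so that
`S̃_{n-1} = S̃_m`.  Here `F i` plays the role of `f_i^{(n)}` and `G i` of `f_i^{(n-1)}`
(characterized by `2·F i = diff_i^{(n)}`, `2·G i = diff_i^{(n-1)}`), `ℤ[t_1,…,t_{n-1}]` is
regarded as a subring of `ℤ[t_1,…,t_n]` via `rename Fin.castSucc`, `t_n = X (Fin.last m)`,
and `w'` is obtained from `w` by deleting the `q`-th entry of the one-line notation. -/
theorem f_restriction_typeB (m : ℕ) (hm : 1 ≤ m)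
    (F : ℕ → SP (m + 1) → Rn (m + 1)) (G : ℕ → SP m → Rn m)
    (hF : ∀ i w, 2 * F i w = diffS (m + 1) i w)
    (hG : ∀ i v, 2 * G i v = diffS m i v)
    (w : SP (m + 1)) (q : Fin (m + 1)) (w' : SP m)
    (hw' : ∀ k : Fin m, w'.1 k =
      if (k : ℕ) < (q : ℕ) then w.1 (Fin.castSucc k) else w.1 k.succ)
    (i : ℕ) (hi : 1 ≤ i) :
    (w.1 q = (m : ℤ) + 1 →
      rename Fin.castSucc (G i w') =
        ∑ j ∈ Finset.range i, F (i - j) w * (-(X (Fin.last m) : Rn (m + 1))) ^ j) ∧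
    (w.1 q = -((m : ℤ) + 1) →
      rename Fin.castSucc (G i w') =
        ∑ j ∈ Finset.range i, F (i - j) w * (X (Fin.last m) : Rn (m + 1)) ^ j +
        ∑ j ∈ Finset.Icc 1 i,
          eS (i - j) (fun k : Fin m => (X (Fin.castSucc k) : Rn (m + 1))) *
            (X (Fin.last m) : Rn (m + 1)) ^ j) :=
  f_restriction_typeB_general m F G hF hG w q w' hw' i
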